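/- arXiv:1401.3160 — 2 statements merged into one kernel-verified Lean document; each statement's English description precedes it below -/
import Mathlib

section
/- Let g be the real symmetric bilinear form on ℝ⁴ defined on 2-by-2 Hermitian-matrix-valued linear forms by det(σ(p)) = −g(p,p), where σ(p) = Σ_j p_j σ^j for Hermitian matrices σ^1,...,σ^4 that are linearly independent over ℝ. Then g has Lorentzian signature: three positive eigenvalues and one negative eigenvalue. -/
/-!
In the coordinates `y = (Re b, Im b, (a - d)/2, (a + d)/2)` of a Hermitian matrix
`[[a, b], [conj b, d]]` one has `-det = y₀² + y₁² + y₂² - y₃²`. Composing these coordinates with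
`p ↦ σ(p)` gives an invertible matrix `L` (linear independence of the `σ^j`), and comparing
quadratic forms gives `g = Lᵀ η L` with `η = diag(1, 1, 1, -1)`; so `T = L⁻¹` works.
-/

open Matrix

theorem Matrix.IsSymm.eq_zero_of_forall_dotProduct_mulVec_self {n R : Type*} [Fintype n]
    [DecidableEq n] [CommRing R] [IsAddTorsionFree R] {A : Matrix n n R} (hA : A.IsSymm)
    (h : ∀ x, x ⬝ᵥ A *ᵥ x = 0) : A = 0 := by
  have hdiag (i : n) : A i i = 0 := by
    simpa [mulVec_single, single_dotProduct] using h (Pi.single i 1)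
  ext i j
  have hpol := h (Pi.single i 1 + Pi.single j 1)
  simp only [mulVec_add, dotProduct_add, add_dotProduct, mulVec_single_one,
    single_one_dotProduct, col_apply, hdiag, hA.apply, zero_add, add_zero, ← two_nsmul] at hpol
  exact (nsmul_eq_zero_iff_right two_ne_zero).mp hpol

theorem Matrix.IsSymm.ext_of_dotProduct_mulVec_self {n R : Type*} [Fintype n]
    [DecidableEq n] [CommRing R] [IsAddTorsionFree R] {A B : Matrix n n R} (hA : A.IsSymm)
    (hB : B.IsSymm) (h : ∀ x, x ⬝ᵥ A *ᵥ x = x ⬝ᵥ B *ᵥ x) : A = B :=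
  sub_eq_zero.mp <| (hA.sub hB).eq_zero_of_forall_dotProduct_mulVec_self fun x => by
    rw [sub_mulVec, dotProduct_sub, h, sub_self]

theorem Matrix.dotProduct_mulVec_self_eq_sum {n R : Type*} [Fintype n] [CommSemiring R]
    (A : Matrix n n R) (x : n → R) : x ⬝ᵥ A *ᵥ x = ∑ i, ∑ j, A i j * x i * x j := by
  simp only [dotProduct, mulVec, Finset.mul_sum]
  exact Finset.sum_congr rfl fun i _ => Finset.sum_congr rfl fun j _ => by ring

theorem Matrix.dotProduct_transpose_mul_mul_mulVec_self {m n R : Type*} [Fintype m] [Fintype n]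
    [CommSemiring R] (L : Matrix m n R) (A : Matrix m m R) (x : n → R) :
    x ⬝ᵥ (Lᵀ * A * L) *ᵥ x = L *ᵥ x ⬝ᵥ A *ᵥ (L *ᵥ x) := by
  rw [← mulVec_mulVec, ← mulVec_mulVec, dotProduct_mulVec, vecMul_transpose]

noncomputable def minkowskiCoords : Matrix (Fin 2) (Fin 2) ℂ →ₗ[ℝ] Fin 4 → ℝ where
  toFun A := ![(A 0 1).re, (A 0 1).im, ((A 0 0).re - (A 1 1).re) / 2,
    ((A 0 0).re + (A 1 1).re) / 2]
  map_add' A B := by ext i; fin_cases i <;> simp <;> ring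
  map_smul' c A := by ext i; fin_cases i <;> simp <;> ring

namespace Matrix.IsHermitian

variable {A : Matrix (Fin 2) (Fin 2) ℂ}

theorem neg_det_eq (hA : A.IsHermitian) :
    -A.det = ((minkowskiCoords A ⬝ᵥ diagonal ![1, 1, 1, -1] *ᵥ minkowskiCoords A : ℝ) : ℂ) := by
  have h00 : A 0 0 = ((A 0 0).re : ℂ) := (Complex.conj_eq_iff_re.mp (hA.apply 0 0)).symm
  have h11 : A 1 1 = ((A 1 1).re : ℂ) := (Complex.conj_eq_iff_re.mp (hA.apply 1 1)).symm
  have h10 : A 1 0 = star (A 0 1) := (hA.apply 1 0).symm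
  rw [det_fin_two, h00, h11, h10, Complex.star_def, Complex.mul_conj, Complex.normSq_apply]
  simp only [minkowskiCoords, LinearMap.coe_mk, AddHom.coe_mk, mulVec_diagonal, dotProduct,
    Fin.sum_univ_four]
  push_cast
  ring

theorem eq_zero_of_minkowskiCoords_eq_zero (hA : A.IsHermitian) (h : minkowskiCoords A = 0) :
    A = 0 := by
  have h00 : A 0 0 = ((A 0 0).re : ℂ) := (Complex.conj_eq_iff_re.mp (hA.apply 0 0)).symm
  have h11 : A 1 1 = ((A 1 1).re : ℂ) := (Complex.conj_eq_iff_re.mp (hA.apply 1 1)).symm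
  have h10 : A 1 0 = star (A 0 1) := (hA.apply 1 0).symm
  have hre : (A 0 1).re = 0 := congrFun h 0
  have him : (A 0 1).im = 0 := congrFun h 1
  have hdiff : ((A 0 0).re - (A 1 1).re) / 2 = 0 := congrFun h 2
  have hsum : ((A 0 0).re + (A 1 1).re) / 2 = 0 := congrFun h 3
  have h01 : A 0 1 = 0 := Complex.ext hre him
  have ha : A 0 0 = 0 := by rw [h00, show (A 0 0).re = 0 by linarith, Complex.ofReal_zero]
  have hd : A 1 1 = 0 := by rw [h11, show (A 1 1).re = 0 by linarith, Complex.ofReal_zero]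
  ext i j
  fin_cases i <;> fin_cases j <;> simp [ha, hd, h01, h10]

end Matrix.IsHermitian

theorem stmt_6 (σ : Fin 4 → Matrix (Fin 2) (Fin 2) ℂ)
    (hherm : ∀ j, (σ j).IsHermitian)
    (hli : LinearIndependent ℝ σ)
    (g : Matrix (Fin 4) (Fin 4) ℝ) (hsymm : gᵀ = g)
    (hg : ∀ p : Fin 4 → ℝ,
      ((∑ α, ∑ β, g α β * p α * p β : ℝ) : ℂ)
        = -Matrix.det (∑ α, p α • σ α)) :
    ∃ T : Matrix (Fin 4) (Fin 4) ℝ, IsUnit T.det ∧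
      Tᵀ * g * T = Matrix.diagonal ![1, 1, 1, -1] := by
  set L := LinearMap.toMatrix' (minkowskiCoords ∘ₗ Fintype.linearCombination ℝ σ)
  have hL (p : Fin 4 → ℝ) : L *ᵥ p = minkowskiCoords (∑ α, p α • σ α) := by
    simp [L, LinearMap.toMatrix'_mulVec, Fintype.linearCombination_apply]
  have hσ (p : Fin 4 → ℝ) : (∑ α, p α • σ α).IsHermitian := by
    rw [isHermitian_iff_isSelfAdjoint]
    exact isSelfAdjoint_sum _ fun α _ => (hherm α).smul (IsSelfAdjoint.all (p α))
  have hLdet : IsUnit L.det := by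
    rw [isUnit_iff_ne_zero, Ne, ← exists_mulVec_eq_zero_iff]
    rintro ⟨p, hp, hLp⟩
    rw [hL] at hLp
    exact hp <| funext <| Fintype.linearIndependent_iff.mp hli p
      ((hσ p).eq_zero_of_minkowskiCoords_eq_zero hLp)
  have hgL : g = Lᵀ * diagonal ![1, 1, 1, -1] * L := by
    refine IsSymm.ext_of_dotProduct_mulVec_self hsymm ?_ fun p => ?_
    · simp only [IsSymm, transpose_mul, transpose_transpose, diagonal_transpose, Matrix.mul_assoc]
    · rw [dotProduct_transpose_mul_mul_mulVec_self, hL, dotProduct_mulVec_self_eq_sum]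
      exact_mod_cast (hg p).trans (hσ p).neg_det_eq
  refine ⟨L⁻¹, isUnit_nonsing_inv_det_iff.mpr hLdet, ?_⟩
  rw [hgL, transpose_nonsing_inv, ← Matrix.mul_assoc _ _ L,
    mul_nonsing_inv_cancel_right (A := L) _ hLdet,
    nonsing_inv_mul_cancel_left (A := Lᵀ) _ ((det_transpose L).symm ▸ hLdet)]
end

section
/- For R ∈ SL(2,ℂ) and the standard Pauli matrices with identity s¹,...,s⁴, the map on coefficient vectors induced by σ ↦ R* σ R is a Lorentz transformation: the real 4×4 matrix Λ defined by R* s^k R = Σ_j Λ^j{}_k s^j (expansion in the Hermitian basis) preserves the quadratic form c₄² − c₁² − c₂² − c₃². -/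
/-! Writing `c • s` for `∑ k, c k • s k`, the matrix `c • s` is `[[c₄ + c₃, c₁ - i c₂], [c₁ + i c₂, c₄ - c₃]]`,
whose determinant is the Minkowski form `c₄² - c₁² - c₂² - c₃²`. Conjugation `σ ↦ R* σ R` is real-linear, so it
sends `c • s` to `(Λ c) • s`, and it preserves determinants because `det R = 1`. -/

open Matrix

lemma Matrix.det_conjTranspose_mul_mul {n R : Type*} [Fintype n] [DecidableEq n] [CommRing R]
    [StarRing R] (A M : Matrix n n R) : (Aᴴ * M * A).det = star A.det * M.det * A.det := by
  rw [det_mul, det_mul, det_conjTranspose]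

lemma LinearMap.map_sum_smul_eq_sum_mulVec_smul {K M N ι κ : Type*} [CommSemiring K]
    [AddCommMonoid M] [Module K M] [AddCommMonoid N] [Module K N] [Fintype ι] [Fintype κ]
    (f : M →ₗ[K] N) (s : ι → M) (t : κ → N) (Λ : Matrix κ ι K)
    (hf : ∀ k, f (s k) = ∑ j, Λ j k • t j) (c : ι → K) :
    f (∑ k, c k • s k) = ∑ j, (Λ *ᵥ c) j • t j := by
  simp only [map_sum, map_smul, hf, Finset.smul_sum, smul_smul, mulVec, dotProduct,
    Finset.sum_smul]
  rw [Finset.sum_comm]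
  simp_rw [mul_comm]

def pauliBasis : Fin 4 → Matrix (Fin 2) (Fin 2) ℂ :=
  ![!![0, 1; 1, 0], !![0, -Complex.I; Complex.I, 0], !![1, 0; 0, -1], !![1, 0; 0, 1]]

lemma sum_smul_pauliBasis (d : Fin 4 → ℝ) :
    ∑ j, d j • pauliBasis j =
      !![(d 3 + d 2 : ℂ), d 0 - Complex.I * d 1; d 0 + Complex.I * d 1, d 3 - d 2] := by
  ext i j
  fin_cases i <;> fin_cases j <;> simp [pauliBasis, Fin.sum_univ_four, Complex.real_smul] <;> ring

lemma det_sum_smul_pauliBasis (d : Fin 4 → ℝ) :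
    (∑ j, d j • pauliBasis j).det = ((d 3 ^ 2 - d 0 ^ 2 - d 1 ^ 2 - d 2 ^ 2 : ℝ) : ℂ) := by
  rw [sum_smul_pauliBasis, det_fin_two_of]
  push_cast
  linear_combination (d 1 : ℂ) ^ 2 * Complex.I_sq

theorem stmt_17 (R : Matrix.SpecialLinearGroup (Fin 2) ℂ)
    (s : Fin 4 → Matrix (Fin 2) (Fin 2) ℂ)
    (hs : s = ![!![(0 : ℂ), 1; 1, 0], !![(0 : ℂ), -Complex.I; Complex.I, 0],
      !![(1 : ℂ), 0; 0, -1], !![(1 : ℂ), 0; 0, 1]])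
    (Λ : Matrix (Fin 4) (Fin 4) ℝ)
    (hΛ : ∀ k, (R : Matrix (Fin 2) (Fin 2) ℂ)ᴴ * s k * R = ∑ j, Λ j k • s j) :
    ∀ c : Fin 4 → ℝ,
      (∑ k, Λ 3 k * c k) ^ 2 - (∑ k, Λ 0 k * c k) ^ 2
        - (∑ k, Λ 1 k * c k) ^ 2 - (∑ k, Λ 2 k * c k) ^ 2
      = c 3 ^ 2 - c 0 ^ 2 - c 1 ^ 2 - c 2 ^ 2 := by
  intro c
  change s = pauliBasis at hs
  subst hs
  let conj : Matrix (Fin 2) (Fin 2) ℂ →ₗ[ℝ] Matrix (Fin 2) (Fin 2) ℂ :=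
    (LinearMap.mulRight ℝ (R : Matrix (Fin 2) (Fin 2) ℂ)).comp
      (LinearMap.mulLeft ℝ (R : Matrix (Fin 2) (Fin 2) ℂ)ᴴ)
  have hconj := conj.map_sum_smul_eq_sum_mulVec_smul pauliBasis pauliBasis Λ hΛ c
  have hdet := congrArg det hconj
  simp only [conj, LinearMap.comp_apply, LinearMap.mulLeft_apply, LinearMap.mulRight_apply,
    det_conjTranspose_mul_mul, det_sum_smul_pauliBasis] at hdet
  rw [R.det_coe, star_one, one_mul, mul_one] at hdet
  exact_mod_cast hdet.symm
end
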